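/- In a graph G, define a weighted distance dist(u,v) as the minimum over all u–v paths P of ∑_{w ∈ P, w ≠ v} deg(w). Then for all u, v in a connected graph on n vertices with maximum degree Δ and diameter D, dist(u,v) ≤ min{3n, ΔD}. -/

import Mathlib

/-!
Take a shortest `u`–`v` path `p`. Its weight is at most `Δ · |p| = Δ · dist(u, v) ≤ Δ D`.
For the other bound, `dist(u, ·)` is injective on `p` and a vertex `w` can only see vertices of
`p` whose distances from `u` differ by at most `2`, so `w` has at most three neighbours on `p`;
double counting the edges between `p` and `V` bounds the sum of degrees along `p` by `3n`.
-/

open SimpleGraph Finset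

noncomputable def weightedDist {V : Type*} [Fintype V]
    (G : SimpleGraph V) [DecidableRel G.Adj] (u v : V) : ℕ :=
  sInf {m | ∃ p : G.Walk u v, p.IsPath ∧
    (p.support.dropLast.map fun w => G.degree w).sum = m}

lemma Finset.card_le_of_forall_le_add (s : Finset ℕ) (k : ℕ) (h : ∀ a ∈ s, ∀ b ∈ s, b ≤ a + k) :
    #s ≤ k + 1 := by
  rcases s.eq_empty_or_nonempty with rfl | hs
  · simp
  have hsub : s ⊆ Icc (s.min' hs) (s.min' hs + k) := fun b hb =>
    mem_Icc.mpr ⟨s.min'_le b hb, h _ (s.min'_mem hs) b hb⟩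
  exact (card_le_card hsub).trans_eq (by rw [Nat.card_Icc]; omega)

lemma List.sum_map_dropLast_le_sum_toFinset {α : Type*} [DecidableEq α] {l : List α}
    (hl : l.Nodup) (f : α → ℕ) : (l.dropLast.map f).sum ≤ ∑ x ∈ l.toFinset, f x := by
  rw [List.sum_toFinset f hl]
  exact ((List.dropLast_sublist l).map f).sum_le_sum fun _ _ => Nat.zero_le _

namespace SimpleGraph

variable {V : Type*} {G : SimpleGraph V}

lemma sum_degree_le_mul_card [Fintype V] [DecidableRel G.Adj] (s : Finset V) (k : ℕ)
    (h : ∀ w, #{x ∈ s | G.Adj x w} ≤ k) : ∑ x ∈ s, G.degree x ≤ k * Fintype.card V := by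
  calc ∑ x ∈ s, G.degree x
      = ∑ x ∈ s, #(univ.bipartiteAbove G.Adj x) := by
        simp only [← card_neighborFinset_eq_degree, neighborFinset_eq_filter, bipartiteAbove]
    _ = ∑ w, #(s.bipartiteBelow G.Adj w) := sum_card_bipartiteAbove_eq_sum_card_bipartiteBelow _
    _ ≤ ∑ _w : V, k := sum_le_sum fun w _ => h w
    _ = k * Fintype.card V := by simp [mul_comm]

namespace Walk

variable {u v : V}

lemma dist_getVert_le (p : G.Walk u v) (i : ℕ) : G.dist u (p.getVert i) ≤ i :=
  (dist_le (p.take i)).trans (by simp)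

lemma dist_getVert_of_length_eq_dist (p : G.Walk u v) (hp : p.length = G.dist u v) {i : ℕ}
    (hi : i ≤ p.length) : G.dist u (p.getVert i) = i := by
  have hsuffix : G.dist (p.getVert i) v ≤ p.length - i := by
    simpa using dist_le (p.drop i)
  have htri := (p.drop i).reachable.dist_triangle_right u
  have := p.dist_getVert_le i
  omega

lemma getVert_dist_of_mem_support (p : G.Walk u v) (hp : p.length = G.dist u v) {x : V}
    (hx : x ∈ p.support) : p.getVert (G.dist u x) = x := by
  obtain ⟨i, rfl, hi⟩ := mem_support_iff_exists_getVert.mp hx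
  rw [p.dist_getVert_of_length_eq_dist hp hi]

lemma card_adj_support_le_three [DecidableEq V] [DecidableRel G.Adj] (p : G.Walk u v)
    (hp : p.length = G.dist u v) (w : V) : #{x ∈ p.support.toFinset | G.Adj x w} ≤ 3 := by
  set T := {x ∈ p.support.toFinset | G.Adj x w}
  have hinj : Set.InjOn (G.dist u) T := fun x hx y hy hxy => by
    simp only [T, coe_filter, List.mem_toFinset, Set.mem_ofPred_eq] at hx hy
    rw [← p.getVert_dist_of_mem_support hp hx.1, hxy, p.getVert_dist_of_mem_support hp hy.1]
  have hclose : ∀ a ∈ T.image (G.dist u), ∀ b ∈ T.image (G.dist u), b ≤ a + 2 := by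
    simp only [mem_image, T, mem_filter, forall_exists_index, and_imp]
    rintro _ x - hxw rfl _ y - hyw rfl
    have hxy : G.dist x y ≤ 2 := dist_le (.cons hxw (.cons hyw.symm .nil))
    have := (hxw.reachable.trans hyw.reachable.symm).dist_triangle_right u
    omega
  rw [← card_image_of_injOn hinj]
  exact (T.image (G.dist u)).card_le_of_forall_le_add 2 hclose

end Walk

end SimpleGraph

/-- In a connected graph on `n` vertices with maximum degree `Δ` and diameter
`D`, the weighted distance between any two vertices is at most `min {3n, ΔD}`. -/
theorem weightedDist_le_min {V : Type*} [Fintype V]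
    (G : SimpleGraph V) [DecidableRel G.Adj] (hconn : G.Connected) (u v : V) :
    weightedDist G u v ≤ min (3 * Fintype.card V) (G.maxDegree * G.diam) := by
  classical
  obtain ⟨p, hpath, hlen⟩ := (hconn u v).exists_path_of_dist
  set weight := (p.support.dropLast.map fun w => G.degree w).sum
  have hweight : weightedDist G u v ≤ weight := Nat.sInf_le ⟨p, hpath, rfl⟩
  refine hweight.trans (le_min ?_ ?_)
  · calc weight ≤ ∑ x ∈ p.support.toFinset, G.degree x :=
          List.sum_map_dropLast_le_sum_toFinset hpath.support_nodup _
      _ ≤ 3 * Fintype.card V :=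
          sum_degree_le_mul_card _ 3 (p.card_adj_support_le_three hlen)
  · have : Nonempty V := hconn.nonempty
    have hdiam : G.dist u v ≤ G.diam := dist_le_diam (connected_iff_ediam_ne_top.mp hconn)
    calc weight ≤ (p.support.dropLast.map fun w => G.degree w).length • G.maxDegree :=
          List.sum_le_card_nsmul _ _ fun _ hd => by
            obtain ⟨x, -, rfl⟩ := List.mem_map.mp hd
            exact G.degree_le_maxDegree x
      _ = G.maxDegree * G.dist u v := by simp [hlen, mul_comm]
      _ ≤ G.maxDegree * G.diam := Nat.mul_le_mul_left _ hdiam
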